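/- arXiv:0910.3757 — 4 statements merged into one kernel-verified Lean document; each statement's English description precedes it below -/
import Mathlib

section
/- Let n,m be positive integers, T>0, L≥0 with LT<1, let f:ℝⁿ×ℝᵐ→ℝⁿ be continuous with |f(x,u)−f(y,u)| ≤ L|x−y| and |f(x,u)| ≤ L|x|+L|u| for all x,y∈ℝⁿ, u∈ℝᵐ, and let u:[0,T]→ℝᵐ be bounded and measurable. Let x,y₀∈ℝⁿ and let y:[0,T]→ℝⁿ be continuous with y(t) = y₀ + ∫₀ᵗ f(y(τ),u(τ)) dτ for all t∈[0,T]. Then for every integer l≥1, |Q^l_{T,u}x − y(T)| ≤ ((LT)^{l+1}/(1−LT)) · (|x| + sup_{0≤τ≤T}|u(τ)|) + e^{LT} |x − y₀|. -/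
/-! The iterates `X k = P^k x̄` all start at `x`, and between functions with equal initial
values `P` contracts by `L T` in the sup norm on `[0,T]`. With
`‖X 1 - X 0‖ ≤ L T (‖x‖ + sup ‖u‖)` from the growth bound, `X k T` is geometrically Cauchy,
and its limit `a` satisfies `‖X l T - a‖ ≤ (L T)^(l+1) (‖x‖ + sup ‖u‖) / (1 - L T)`.

The solution `y` is a fixed point of `P` with another initial value, so contraction does not
apply; instead, with `M` a bound for `‖x - y‖` on `[0,T]`, induction gives
`‖X k t - y t‖ ≤ ‖x - y₀‖ exp (L t) + M (L t)^k / k!`, and as `k → ∞` this yields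
`‖a - y T‖ ≤ exp (L T) ‖x - y₀‖`. -/

open Set MeasureTheory

noncomputable section

/-- The Picard operator `(P_{T,u}x)(t) = x(0) + ∫₀ᵗ f(x(τ),u(τ)) dτ`. -/
def picard {n m : ℕ}
    (f : EuclideanSpace ℝ (Fin n) → EuclideanSpace ℝ (Fin m) → EuclideanSpace ℝ (Fin n))
    (u : ℝ → EuclideanSpace ℝ (Fin m)) (x : ℝ → EuclideanSpace ℝ (Fin n)) :
    ℝ → EuclideanSpace ℝ (Fin n) :=
  fun t => x 0 + ∫ τ in (0:ℝ)..t, f (x τ) (u τ)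

/-- `Q^l_{T,u} x := (P^l_{T,u} x̄)(T)` where `x̄` is the constant function equal to `x`. -/
def Qiter {n m : ℕ}
    (f : EuclideanSpace ℝ (Fin n) → EuclideanSpace ℝ (Fin m) → EuclideanSpace ℝ (Fin n))
    (u : ℝ → EuclideanSpace ℝ (Fin m)) (T : ℝ) (l : ℕ) (x : EuclideanSpace ℝ (Fin n)) :
    EuclideanSpace ℝ (Fin n) :=
  (picard f u)^[l] (fun _ => x) T

open Filter Topology

theorem add_mul_integral_exp_add_pow_div_factorial (A M L t : ℝ) (k : ℕ) :
    A + L * ∫ s in 0..t, (A * Real.exp (L * s) + M * (L * s) ^ k / k.factorial) =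
      A * Real.exp (L * t) + M * (L * t) ^ (k + 1) / (k + 1).factorial := by
  have hderiv : ∀ s ∈ uIcc 0 t,
      HasDerivAt (fun s => A * Real.exp (L * s) + M * (L * s) ^ (k + 1) / (k + 1).factorial)
        (L * (A * Real.exp (L * s) + M * (L * s) ^ k / k.factorial)) s := fun s _ => by
    have hLs := (hasDerivAt_id s).const_mul L
    refine ((hLs.exp.const_mul A).add (((hLs.pow (k + 1)).const_mul M).div_const
      ((k + 1).factorial : ℝ))).congr_deriv ?_
    rw [Nat.factorial_succ]
    push_cast
    field_simp
    simp only [id]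
    ring
  rw [← intervalIntegral.integral_const_mul,
    intervalIntegral.integral_eq_sub_of_hasDerivAt hderiv
      (Continuous.intervalIntegrable (by fun_prop) _ _)]
  simp

section Picard

variable {n m : ℕ}
  {f : EuclideanSpace ℝ (Fin n) → EuclideanSpace ℝ (Fin m) → EuclideanSpace ℝ (Fin n)}
  {u : ℝ → EuclideanSpace ℝ (Fin m)} {T L C : ℝ} {z w : ℝ → EuclideanSpace ℝ (Fin n)}

theorem integrableOn_picard_integrand
    (hf : Continuous fun p : EuclideanSpace ℝ (Fin n) × EuclideanSpace ℝ (Fin m) => f p.1 p.2)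
    (hu : Measurable u) (hC : ∀ t ∈ Icc 0 T, ‖u t‖ ≤ C) (hz : ContinuousOn z (Icc 0 T)) :
    IntegrableOn (fun τ => f (z τ) (u τ)) (Icc 0 T) := by
  obtain ⟨R, hR⟩ := isCompact_Icc.exists_bound_of_continuousOn hz
  obtain ⟨K, hK⟩ := ((isCompact_closedBall 0 R).prod (isCompact_closedBall 0 C)
    ).exists_bound_of_continuousOn hf.continuousOn
  have hmeas : AEStronglyMeasurable (fun τ => f (z τ) (u τ)) (volume.restrict (Icc 0 T)) :=
    (hf.measurable.comp_aemeasurable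
      ((hz.aemeasurable measurableSet_Icc).prodMk hu.aemeasurable)).aestronglyMeasurable
  refine Integrable.mono' (g := fun _ => K)
    (integrableOn_const measure_Icc_lt_top.ne enorm_ne_top) hmeas
    ((ae_restrict_iff' measurableSet_Icc).mpr (ae_of_all _ fun τ hτ => ?_))
  exact hK (z τ, u τ) ⟨by simpa using hR τ hτ, by simpa using hC τ hτ⟩

theorem picard_apply_zero : picard f u z 0 = z 0 := by
  simp [picard]

theorem iterate_picard_apply_zero (k : ℕ) : (picard f u)^[k] z 0 = z 0 := by
  induction k with
  | zero => rfl
  | succ k ih => rw [Function.iterate_succ_apply', picard_apply_zero, ih]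

theorem continuousOn_picard (hT : 0 ≤ T)
    (hz : IntegrableOn (fun τ => f (z τ) (u τ)) (Icc 0 T)) :
    ContinuousOn (picard f u z) (Icc 0 T) := by
  have h := intervalIntegral.continuousOn_primitive_interval (uIcc_of_le hT ▸ hz)
  rw [uIcc_of_le hT] at h
  exact continuousOn_const.add h

theorem continuousOn_iterate_picard (hT : 0 ≤ T)
    (hf : Continuous fun p : EuclideanSpace ℝ (Fin n) × EuclideanSpace ℝ (Fin m) => f p.1 p.2)
    (hu : Measurable u) (hC : ∀ t ∈ Icc 0 T, ‖u t‖ ≤ C) (hz : ContinuousOn z (Icc 0 T))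
    (k : ℕ) : ContinuousOn ((picard f u)^[k] z) (Icc 0 T) := by
  induction k with
  | zero => exact hz
  | succ k ih =>
    rw [Function.iterate_succ']
    exact continuousOn_picard hT (integrableOn_picard_integrand hf hu hC ih)

theorem norm_picard_sub_picard_le (hL : 0 ≤ L)
    (hf_lip : ∀ x y v, ‖f x v - f y v‖ ≤ L * ‖x - y‖)
    (hz : IntegrableOn (fun τ => f (z τ) (u τ)) (Icc 0 T))
    (hw : IntegrableOn (fun τ => f (w τ) (u τ)) (Icc 0 T))
    {g : ℝ → ℝ} (hg : IntegrableOn g (Icc 0 T))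
    (hzw : ∀ τ ∈ Icc 0 T, ‖z τ - w τ‖ ≤ g τ)
    {t : ℝ} (ht : t ∈ Icc 0 T) :
    ‖picard f u z t - picard f u w t‖ ≤ ‖z 0 - w 0‖ + L * ∫ τ in 0..t, g τ := by
  have hsub : Icc 0 t ⊆ Icc 0 T := Icc_subset_Icc_right ht.2
  have hz' := (intervalIntegrable_iff_integrableOn_Icc_of_le ht.1).mpr (hz.mono_set hsub)
  have hw' := (intervalIntegrable_iff_integrableOn_Icc_of_le ht.1).mpr (hw.mono_set hsub)
  have hg' := (intervalIntegrable_iff_integrableOn_Icc_of_le ht.1).mpr (hg.mono_set hsub)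
  have hdiff : picard f u z t - picard f u w t =
      (z 0 - w 0) + ∫ τ in 0..t, (f (z τ) (u τ) - f (w τ) (u τ)) := by
    rw [intervalIntegral.integral_sub hz' hw', picard, picard]
    abel
  have hint :
      ‖∫ τ in 0..t, (f (z τ) (u τ) - f (w τ) (u τ))‖ ≤ ∫ τ in 0..t, L * g τ :=
    intervalIntegral.norm_integral_le_of_norm_le ht.1 (ae_of_all _ fun τ hτ =>
      (hf_lip _ _ _).trans (mul_le_mul_of_nonneg_left
        (hzw τ ⟨hτ.1.le, hτ.2.trans ht.2⟩) hL)) (hg'.const_mul L)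
  rw [hdiff, ← intervalIntegral.integral_const_mul]
  exact (norm_add_le _ _).trans (add_le_add_right hint _)

theorem norm_picard_sub_picard_le_of_apply_zero_eq (hL : 0 ≤ L)
    (hf_lip : ∀ x y v, ‖f x v - f y v‖ ≤ L * ‖x - y‖)
    (hz : IntegrableOn (fun τ => f (z τ) (u τ)) (Icc 0 T))
    (hw : IntegrableOn (fun τ => f (w τ) (u τ)) (Icc 0 T)) (h0 : z 0 = w 0) {δ : ℝ}
    (hzw : ∀ τ ∈ Icc 0 T, ‖z τ - w τ‖ ≤ δ) {t : ℝ} (ht : t ∈ Icc 0 T) :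
    ‖picard f u z t - picard f u w t‖ ≤ L * T * δ := by
  have hδ : 0 ≤ δ := (norm_nonneg _).trans (hzw 0 ⟨le_rfl, ht.1.trans ht.2⟩)
  calc ‖picard f u z t - picard f u w t‖ ≤ ‖z 0 - w 0‖ + L * ∫ _ in 0..t, δ :=
        norm_picard_sub_picard_le hL hf_lip hz hw (integrableOn_const measure_Icc_lt_top.ne) hzw ht
    _ = L * t * δ := by simp [h0, mul_assoc]
    _ ≤ L * T * δ := by gcongr; exact ht.2

theorem norm_iterate_picard_succ_sub_le (hT : 0 ≤ T) (hL : 0 ≤ L)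
    (hf : Continuous fun p : EuclideanSpace ℝ (Fin n) × EuclideanSpace ℝ (Fin m) => f p.1 p.2)
    (hf_lip : ∀ x y v, ‖f x v - f y v‖ ≤ L * ‖x - y‖)
    (hu : Measurable u) (hC : ∀ t ∈ Icc 0 T, ‖u t‖ ≤ C) (hz : ContinuousOn z (Icc 0 T))
    {δ : ℝ} (hδ : ∀ t ∈ Icc 0 T, ‖picard f u z t - z t‖ ≤ δ) (k : ℕ) :
    ∀ t ∈ Icc 0 T,
      ‖(picard f u)^[k + 1] z t - (picard f u)^[k] z t‖ ≤ (L * T) ^ k * δ := by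
  induction k with
  | zero => simpa using hδ
  | succ k ih =>
    intro t ht
    have hint := fun j => integrableOn_picard_integrand hf hu hC
      (continuousOn_iterate_picard hT hf hu hC hz j)
    have h := norm_picard_sub_picard_le_of_apply_zero_eq hL hf_lip (hint (k + 1)) (hint k)
      (by rw [iterate_picard_apply_zero, iterate_picard_apply_zero]) ih ht
    rwa [← Function.iterate_succ_apply' (picard f u),
      ← Function.iterate_succ_apply' (picard f u), ← mul_assoc, ← pow_succ'] at h

theorem norm_picard_const_sub_le (hL : 0 ≤ L)
    (hf_growth : ∀ x v, ‖f x v‖ ≤ L * ‖x‖ + L * ‖v‖)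
    (hC : ∀ t ∈ Icc 0 T, ‖u t‖ ≤ C) (x : EuclideanSpace ℝ (Fin n)) {t : ℝ}
    (ht : t ∈ Icc 0 T) :
    ‖picard f u (fun _ => x) t - x‖ ≤ L * T * (‖x‖ + C) := by
  have hC0 : 0 ≤ C := (norm_nonneg _).trans (hC 0 ⟨le_rfl, ht.1.trans ht.2⟩)
  have hbound : ∀ τ ∈ uIoc 0 t, ‖f x (u τ)‖ ≤ L * (‖x‖ + C) := fun τ hτ => by
    rw [uIoc_of_le ht.1] at hτ
    calc ‖f x (u τ)‖ ≤ L * ‖x‖ + L * ‖u τ‖ := hf_growth _ _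
      _ ≤ L * (‖x‖ + C) := by
        rw [← mul_add]; gcongr; exact hC τ ⟨hτ.1.le, hτ.2.trans ht.2⟩
  calc ‖picard f u (fun _ => x) t - x‖ = ‖∫ τ in 0..t, f x (u τ)‖ := by simp [picard]
    _ ≤ L * (‖x‖ + C) * |t - 0| := intervalIntegral.norm_integral_le_of_norm_le_const hbound
    _ ≤ L * (‖x‖ + C) * T := by rw [sub_zero, abs_of_nonneg ht.1]; gcongr; exact ht.2
    _ = L * T * (‖x‖ + C) := by ring

theorem norm_iterate_picard_sub_le (hT : 0 ≤ T) (hL : 0 ≤ L)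
    (hf : Continuous fun p : EuclideanSpace ℝ (Fin n) × EuclideanSpace ℝ (Fin m) => f p.1 p.2)
    (hf_lip : ∀ x y v, ‖f x v - f y v‖ ≤ L * ‖x - y‖)
    (hu : Measurable u) (hC : ∀ t ∈ Icc 0 T, ‖u t‖ ≤ C)
    (hz : ContinuousOn z (Icc 0 T)) (hw : ContinuousOn w (Icc 0 T))
    (hw_fix : ∀ t ∈ Icc 0 T, picard f u w t = w t) {M : ℝ}
    (hM : ∀ t ∈ Icc 0 T, ‖z t - w t‖ ≤ M) (k : ℕ) :
    ∀ t ∈ Icc 0 T, ‖(picard f u)^[k] z t - w t‖ ≤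
      ‖z 0 - w 0‖ * Real.exp (L * t) + M * (L * t) ^ k / k.factorial := by
  induction k with
  | zero =>
    intro t ht
    have : 0 ≤ ‖z 0 - w 0‖ * Real.exp (L * t) := by positivity
    simpa using (hM t ht).trans (le_add_of_nonneg_left this)
  | succ k ih =>
    intro t ht
    have h := norm_picard_sub_picard_le hL hf_lip
      (integrableOn_picard_integrand hf hu hC (continuousOn_iterate_picard hT hf hu hC hz k))
      (integrableOn_picard_integrand hf hu hC hw) (Continuous.integrableOn_Icc (by fun_prop)) ih ht
    rwa [iterate_picard_apply_zero, add_mul_integral_exp_add_pow_div_factorial, hw_fix t ht,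
      ← Function.iterate_succ_apply' (picard f u)] at h

theorem dist_le_of_tendsto_iterate_picard (hT : 0 ≤ T) (hL : 0 ≤ L)
    (hf : Continuous fun p : EuclideanSpace ℝ (Fin n) × EuclideanSpace ℝ (Fin m) => f p.1 p.2)
    (hf_lip : ∀ x y v, ‖f x v - f y v‖ ≤ L * ‖x - y‖)
    (hu : Measurable u) (hC : ∀ t ∈ Icc 0 T, ‖u t‖ ≤ C)
    (hz : ContinuousOn z (Icc 0 T)) (hw : ContinuousOn w (Icc 0 T))
    (hw_fix : ∀ t ∈ Icc 0 T, picard f u w t = w t) {a : EuclideanSpace ℝ (Fin n)}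
    (ha : Tendsto (fun k => (picard f u)^[k] z T) atTop (𝓝 a)) :
    dist a (w T) ≤ Real.exp (L * T) * ‖z 0 - w 0‖ := by
  obtain ⟨M, hM⟩ := isCompact_Icc.exists_bound_of_continuousOn (hz.sub hw)
  have hbound := fun k => norm_iterate_picard_sub_le hT hL hf hf_lip hu hC hz hw hw_fix hM k T
    ⟨hT, le_rfl⟩
  have hlim : Tendsto (fun k : ℕ => ‖z 0 - w 0‖ * Real.exp (L * T) +
      M * (L * T) ^ k / k.factorial) atTop (𝓝 (‖z 0 - w 0‖ * Real.exp (L * T))) := by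
    simpa [mul_div_assoc] using
      ((FloorSemiring.tendsto_pow_div_factorial_atTop (L * T)).const_mul M).const_add
        (‖z 0 - w 0‖ * Real.exp (L * T))
  rw [mul_comm]
  exact le_of_tendsto_of_tendsto' (ha.dist tendsto_const_nhds) hlim fun k => by
    simpa [dist_eq_norm] using hbound k

theorem dist_iterate_picard_const_le (hT : 0 ≤ T) (hL : 0 ≤ L)
    (hf : Continuous fun p : EuclideanSpace ℝ (Fin n) × EuclideanSpace ℝ (Fin m) => f p.1 p.2)
    (hf_lip : ∀ x y v, ‖f x v - f y v‖ ≤ L * ‖x - y‖)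
    (hf_growth : ∀ x v, ‖f x v‖ ≤ L * ‖x‖ + L * ‖v‖)
    (hu : Measurable u) (hC : ∀ t ∈ Icc 0 T, ‖u t‖ ≤ C) (x : EuclideanSpace ℝ (Fin n))
    (k : ℕ) :
    dist ((picard f u)^[k] (fun _ => x) T) ((picard f u)^[k + 1] (fun _ => x) T) ≤
      L * T * (‖x‖ + C) * (L * T) ^ k := by
  rw [dist_comm, dist_eq_norm, mul_comm]
  exact norm_iterate_picard_succ_sub_le hT hL hf hf_lip hu hC continuousOn_const
    (fun t ht => norm_picard_const_sub_le hL hf_growth hC x ht) k T ⟨hT, le_rfl⟩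

end Picard

theorem stmt4_general (n m : ℕ) (T L : ℝ) (hT : 0 < T) (hL : 0 ≤ L)
    (hLT : L * T < 1)
    (f : EuclideanSpace ℝ (Fin n) → EuclideanSpace ℝ (Fin m) → EuclideanSpace ℝ (Fin n))
    (hf_cont : Continuous fun p : EuclideanSpace ℝ (Fin n) × EuclideanSpace ℝ (Fin m) => f p.1 p.2)
    (hf_lip : ∀ (x y : EuclideanSpace ℝ (Fin n)) (v : EuclideanSpace ℝ (Fin m)),
      ‖f x v - f y v‖ ≤ L * ‖x - y‖)
    (hf_growth : ∀ (x : EuclideanSpace ℝ (Fin n)) (v : EuclideanSpace ℝ (Fin m)),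
      ‖f x v‖ ≤ L * ‖x‖ + L * ‖v‖)
    (u : ℝ → EuclideanSpace ℝ (Fin m)) (hu_meas : Measurable u)
    (hu_bd : ∃ C, ∀ t ∈ Set.Icc (0:ℝ) T, ‖u t‖ ≤ C)
    (x y₀ : EuclideanSpace ℝ (Fin n))
    (y : ℝ → EuclideanSpace ℝ (Fin n)) (hy : ContinuousOn y (Set.Icc 0 T))
    (hy_sol : ∀ t ∈ Set.Icc (0:ℝ) T, y t = y₀ + ∫ τ in (0:ℝ)..t, f (y τ) (u τ))
    (l : ℕ) :
    ‖Qiter f u T l x - y T‖ ≤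
      ((L * T) ^ (l + 1) / (1 - L * T)) * (‖x‖ + ⨆ τ : Set.Icc (0:ℝ) T, ‖u τ‖) +
        Real.exp (L * T) * ‖x - y₀‖ := by
  obtain ⟨C₀, hC₀⟩ := hu_bd
  have hC : ∀ t ∈ Icc 0 T, ‖u t‖ ≤ ⨆ τ : Icc (0:ℝ) T, ‖u τ‖ := fun t ht =>
    le_ciSup (f := fun τ : Icc (0:ℝ) T => ‖u τ‖)
      ⟨C₀, by rintro _ ⟨τ, rfl⟩; exact hC₀ τ τ.2⟩ ⟨t, ht⟩
  have hy0 : y 0 = y₀ := by simpa using hy_sol 0 ⟨le_rfl, hT.le⟩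
  have hy_fix : ∀ t ∈ Icc 0 T, picard f u y t = y t := fun t ht => by
    rw [picard, hy0, hy_sol t ht]
  have hstep := dist_iterate_picard_const_le hT.le hL hf_cont hf_lip hf_growth hu_meas hC x
  obtain ⟨a, ha⟩ := cauchySeq_tendsto_of_complete (cauchySeq_of_le_geometric _ _ hLT hstep)
  calc ‖Qiter f u T l x - y T‖ ≤ dist (Qiter f u T l x) a + dist a (y T) :=
        (dist_eq_norm _ _).symm.trans_le (dist_triangle _ _ _)
    _ ≤ L * T * (‖x‖ + ⨆ τ : Icc (0:ℝ) T, ‖u τ‖) * (L * T) ^ l / (1 - L * T) +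
        Real.exp (L * T) * ‖x - y 0‖ :=
      add_le_add (dist_le_of_le_geometric_of_tendsto _ _ hLT hstep ha l)
        (dist_le_of_tendsto_iterate_picard hT.le hL hf_cont hf_lip hu_meas hC continuousOn_const
          hy hy_fix ha)
    _ = _ := by rw [hy0, pow_succ]; ring

theorem stmt4 (n m : ℕ) (hn : 0 < n) (hm : 0 < m) (T L : ℝ) (hT : 0 < T) (hL : 0 ≤ L)
    (hLT : L * T < 1)
    (f : EuclideanSpace ℝ (Fin n) → EuclideanSpace ℝ (Fin m) → EuclideanSpace ℝ (Fin n))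
    (hf_cont : Continuous fun p : EuclideanSpace ℝ (Fin n) × EuclideanSpace ℝ (Fin m) => f p.1 p.2)
    (hf_lip : ∀ (x y : EuclideanSpace ℝ (Fin n)) (v : EuclideanSpace ℝ (Fin m)),
      ‖f x v - f y v‖ ≤ L * ‖x - y‖)
    (hf_growth : ∀ (x : EuclideanSpace ℝ (Fin n)) (v : EuclideanSpace ℝ (Fin m)),
      ‖f x v‖ ≤ L * ‖x‖ + L * ‖v‖)
    (u : ℝ → EuclideanSpace ℝ (Fin m)) (hu_meas : Measurable u)
    (hu_bd : ∃ C, ∀ t ∈ Set.Icc (0:ℝ) T, ‖u t‖ ≤ C)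
    (x y₀ : EuclideanSpace ℝ (Fin n))
    (y : ℝ → EuclideanSpace ℝ (Fin n)) (hy : ContinuousOn y (Set.Icc 0 T))
    (hy_sol : ∀ t ∈ Set.Icc (0:ℝ) T, y t = y₀ + ∫ τ in (0:ℝ)..t, f (y τ) (u τ))
    (l : ℕ) (hl : 1 ≤ l) :
    ‖Qiter f u T l x - y T‖ ≤
      ((L * T) ^ (l + 1) / (1 - L * T)) * (‖x‖ + ⨆ τ : Set.Icc (0:ℝ) T, ‖u τ‖) +
        Real.exp (L * T) * ‖x - y₀‖ :=
  stmt4_general n m T L hT hL hLT f hf_cont hf_lip hf_growth u hu_meas hu_bd x y₀ y hy hy_sol l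
end
end

section
/- Let n,m be positive integers, L₁>0, L₂≥0, r>0 and ε>0. Let u:[0,r]→ℝᵐ be measurable and bounded, and let x:[0,r]→ℝⁿ be differentiable with |ẋ(t)| ≤ L₁|x(t)| + L₂|u(t)| for all t∈[0,r]. Then sup_{0≤s≤r}|x(s)| ≤ e^{((2+ε)/2)L₁ r} |x(0)| + (L₂/(εL₁)) · √(ε/(2+ε)) · √(e^{(2+ε)L₁ r} − 1) · sup_{0≤s≤r}|u(s)|. -/
/-!
Differentiating `‖x‖²` along the trajectory and using the growth bound together with
Young's inequality `2 L₂ ‖x‖ ‖u‖ ≤ ε L₁ ‖x‖² + (ε L₁)⁻¹ L₂² ‖u‖²` gives the scalar differential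
inequality `(‖x‖²)' ≤ (2 + ε) L₁ ‖x‖² + (ε L₁)⁻¹ (L₂ sup ‖u‖)²`. Grönwall's inequality bounds
`‖x‖²` by the solution of the corresponding linear ODE, and `√(p² + q²) ≤ p + q` splits its
square root into the two terms of the claim.
-/

open Set

theorem norm_sq_le_gronwallBound_of_norm_deriv_le {E : Type*} [NormedAddCommGroup E]
    [InnerProductSpace ℝ E] {x x' : ℝ → E} {L B c a b : ℝ} (hc : 0 < c)
    (hx : ∀ t ∈ Icc a b, HasDerivAt x (x' t) t)
    (bound : ∀ t ∈ Icc a b, ‖x' t‖ ≤ L * ‖x t‖ + B) :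
    ∀ t ∈ Icc a b,
      ‖x t‖ ^ 2 ≤ gronwallBound (‖x a‖ ^ 2) (2 * L + c) (c⁻¹ * B ^ 2) (t - a) := by
  refine le_gronwallBound_of_liminf_deriv_right_le (f' := fun t => 2 * inner ℝ (x t) (x' t))
    (fun t ht => (hx t ht).norm_sq.continuousAt.continuousWithinAt)
    (fun t ht _ hρ =>
      (hx t (Ico_subset_Icc_self ht)).norm_sq.hasDerivWithinAt.liminf_right_slope_le hρ)
    le_rfl fun t ht => ?_
  have ht : t ∈ Icc a b := Ico_subset_Icc_self ht
  calc 2 * inner ℝ (x t) (x' t)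
      ≤ 2 * (‖x t‖ * ‖x' t‖) := by gcongr; exact real_inner_le_norm _ _
    _ ≤ 2 * (‖x t‖ * (L * ‖x t‖ + B)) := by gcongr; exact bound t ht
    _ = 2 * L * ‖x t‖ ^ 2 + 2 * ‖x t‖ * B := by ring
    _ ≤ 2 * L * ‖x t‖ ^ 2 + (c * ‖x t‖ ^ 2 + c⁻¹ * B ^ 2) := by
        gcongr; exact two_mul_le_add_mul_sq hc
    _ = (2 * L + c) * ‖x t‖ ^ 2 + c⁻¹ * B ^ 2 := by ring

theorem sqrt_gronwallBound_le {δ K ε x : ℝ} (hδ : 0 ≤ δ) (hε : 0 ≤ ε) (hK : 0 < K) (hx : 0 ≤ x) :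
    √(gronwallBound δ K ε x) ≤
      √δ * Real.exp (K * x / 2) + √(ε / K) * √(Real.exp (K * x) - 1) := by
  have hexp : 0 ≤ Real.exp (K * x) - 1 := by
    linarith [Real.one_le_exp (mul_nonneg hK.le hx)]
  have hhalf : Real.exp (K * x / 2) ^ 2 = Real.exp (K * x) := by
    rw [← Real.exp_nat_mul]; ring_nf
  rw [Real.sqrt_le_left (by positivity), gronwallBound_of_K_ne_0 hK.ne']
  calc δ * Real.exp (K * x) + ε / K * (Real.exp (K * x) - 1)
      = (√δ * Real.exp (K * x / 2)) ^ 2 + (√(ε / K) * √(Real.exp (K * x) - 1)) ^ 2 := by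
        rw [mul_pow, mul_pow, Real.sq_sqrt hδ, Real.sq_sqrt (by positivity), Real.sq_sqrt hexp,
          hhalf]
    _ ≤ _ := pow_add_pow_le (by positivity) (by positivity) two_ne_zero

theorem stmt8_general (n m : ℕ) (L₁ L₂ r ε : ℝ)
    (hL₁ : 0 < L₁) (hL₂ : 0 ≤ L₂) (hr : 0 < r) (hε : 0 < ε)
    (u : ℝ → EuclideanSpace ℝ (Fin m))
    (hu_bd : ∃ C, ∀ s ∈ Set.Icc (0:ℝ) r, ‖u s‖ ≤ C)
    (x x' : ℝ → EuclideanSpace ℝ (Fin n))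
    (hx : ∀ t ∈ Set.Icc (0:ℝ) r, HasDerivAt x (x' t) t)
    (hineq : ∀ t ∈ Set.Icc (0:ℝ) r, ‖x' t‖ ≤ L₁ * ‖x t‖ + L₂ * ‖u t‖) :
    (⨆ s : Set.Icc (0:ℝ) r, ‖x s‖) ≤
      Real.exp (((2 + ε) / 2) * L₁ * r) * ‖x 0‖ +
        (L₂ / (ε * L₁)) * Real.sqrt (ε / (2 + ε)) *
          Real.sqrt (Real.exp ((2 + ε) * L₁ * r) - 1) *
          ⨆ s : Set.Icc (0:ℝ) r, ‖u s‖ := by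
  set U := ⨆ s : Set.Icc (0:ℝ) r, ‖u s‖
  have hU : ∀ s ∈ Icc (0:ℝ) r, ‖u s‖ ≤ U := fun s hs =>
    le_ciSup (hu_bd.imp fun _ hC => forall_mem_range.2 fun s => hC s s.2)
      (⟨s, hs⟩ : Icc (0:ℝ) r)
  have hU0 : 0 ≤ U := Real.iSup_nonneg fun _ => norm_nonneg _
  have hK : 2 * L₁ + ε * L₁ = (2 + ε) * L₁ := by ring
  have hgron := norm_sq_le_gronwallBound_of_norm_deriv_le (B := L₂ * U) (mul_pos hε hL₁) hx
    fun t ht => (hineq t ht).trans (by gcongr; exact hU t ht)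
  have hcoef : √((ε * L₁)⁻¹ * (L₂ * U) ^ 2 / ((2 + ε) * L₁)) =
      L₂ / (ε * L₁) * √(ε / (2 + ε)) * U := by
    rw [show (ε * L₁)⁻¹ * (L₂ * U) ^ 2 / ((2 + ε) * L₁) =
        (L₂ / (ε * L₁) * U) ^ 2 * (ε / (2 + ε)) by field_simp,
      Real.sqrt_mul (sq_nonneg _), Real.sqrt_sq (by positivity)]
    ring
  have : Nonempty (Icc (0:ℝ) r) := ⟨⟨0, le_rfl, hr.le⟩⟩
  refine ciSup_le fun ⟨t, ht⟩ => ?_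
  rw [hK] at hgron
  calc ‖x t‖ = √(‖x t‖ ^ 2) := (Real.sqrt_sq (norm_nonneg _)).symm
    _ ≤ √(gronwallBound (‖x 0‖ ^ 2) ((2 + ε) * L₁) ((ε * L₁)⁻¹ * (L₂ * U) ^ 2) r) := by
        refine Real.sqrt_le_sqrt ((hgron t ht).trans ?_)
        exact gronwallBound_mono (by positivity) (by positivity) (by positivity)
          (by linarith [ht.2])
    _ ≤ _ := sqrt_gronwallBound_le (by positivity) (by positivity) (by positivity) hr.le
    _ = _ := by rw [Real.sqrt_sq (norm_nonneg _), hcoef]; ring_nf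

/-- Trajectory bound used in the 'no predictor' case of the remarks following Theorem 2.2. -/
theorem stmt8 (n m : ℕ) (hn : 0 < n) (hm : 0 < m) (L₁ L₂ r ε : ℝ)
    (hL₁ : 0 < L₁) (hL₂ : 0 ≤ L₂) (hr : 0 < r) (hε : 0 < ε)
    (u : ℝ → EuclideanSpace ℝ (Fin m)) (hu_meas : Measurable u)
    (hu_bd : ∃ C, ∀ s ∈ Set.Icc (0:ℝ) r, ‖u s‖ ≤ C)
    (x x' : ℝ → EuclideanSpace ℝ (Fin n))
    (hx : ∀ t ∈ Set.Icc (0:ℝ) r, HasDerivAt x (x' t) t)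
    (hineq : ∀ t ∈ Set.Icc (0:ℝ) r, ‖x' t‖ ≤ L₁ * ‖x t‖ + L₂ * ‖u t‖) :
    (⨆ s : Set.Icc (0:ℝ) r, ‖x s‖) ≤
      Real.exp (((2 + ε) / 2) * L₁ * r) * ‖x 0‖ +
        (L₂ / (ε * L₁)) * Real.sqrt (ε / (2 + ε)) *
          Real.sqrt (Real.exp ((2 + ε) * L₁ * r) - 1) *
          ⨆ s : Set.Icc (0:ℝ) r, ‖u s‖ :=
  stmt8_general n m L₁ L₂ r ε hL₁ hL₂ hr hε u hu_bd x x' hx hineq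
end

section
/- Let n,m be positive integers, L₁>0, L₂≥0, R≥0, r>0 and ε>0. Let k:ℝⁿ→ℝᵐ satisfy |k(a)−k(b)| ≤ R|a−b| for all a,b∈ℝⁿ. Let u:[0,r]→ℝᵐ be measurable and bounded, and let x:[0,r]→ℝⁿ be differentiable with |ẋ(t)| ≤ L₁|x(t)| + L₂|u(t)| for all t∈[0,r]. Then |k(x(r)) − k(x(0))| ≤ R L₁ r e^{((2+ε)/2)L₁ r} |x(0)| + R L₂ r · ( (1/ε)·√(ε/(2+ε))·√(e^{(2+ε)L₁ r} − 1) + 1 ) · sup_{0≤s≤r}|u(s)|. -/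
/-!
Since `u` is bounded by `U := sup ‖u‖`, the state obeys `‖ẋ‖ ≤ L₁ ‖x‖ + L₂ U`. Grönwall bounds
`‖x‖` on `[0, r]`, hence `‖ẋ‖ ≤ e^{L₁ r} (L₁ ‖x 0‖ + L₂ U)`, and the mean value inequality gives
`‖x r - x 0‖ ≤ r e^{L₁ r} (L₁ ‖x 0‖ + L₂ U)`. It remains to compare constants: trivially
`e^{L₁ r} ≤ e^{(2+ε) L₁ r / 2}`, and `e^{L₁ r} - 1 ≤ √((e^{(2+ε) L₁ r} - 1) / (ε (2+ε)))` because
`t ↦ e^{(2+ε) t} - ε (2+ε) (e^t - 1)²` is nondecreasing.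
-/

open Set

namespace Real

lemma exp_sub_one_le_mul_exp (t : ℝ) : exp t - 1 ≤ t * exp t := by
  have h := mul_le_mul_of_nonneg_right (one_sub_le_exp_neg t) (exp_pos t).le
  rw [← exp_add, neg_add_cancel, exp_zero, sub_mul, one_mul] at h
  linarith

lemma two_mul_mul_exp_sub_one_le {ε : ℝ} (hε : 0 ≤ ε) (t : ℝ) :
    2 * ε * (exp t - 1) ≤ exp ((1 + ε) * t) :=
  calc 2 * ε * (exp t - 1) ≤ 2 * ε * (t * exp t) := by gcongr; exact exp_sub_one_le_mul_exp t
    _ = 2 * (ε * t) * exp t := by ring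
    _ ≤ exp (ε * t) * exp t := by gcongr; exact two_mul_le_exp
    _ = exp ((1 + ε) * t) := by rw [← exp_add]; ring_nf

lemma mul_mul_exp_sub_one_sq_le {ε a : ℝ} (hε : 0 ≤ ε) (ha : 0 ≤ a) :
    ε * (2 + ε) * (exp a - 1) ^ 2 ≤ exp ((2 + ε) * a) - 1 := by
  let F : ℝ → ℝ := fun t => exp ((2 + ε) * t) - ε * (2 + ε) * (exp t - 1) ^ 2
  have hF : ∀ t, HasDerivAt F
      ((2 + ε) * exp t * (exp ((1 + ε) * t) - 2 * ε * (exp t - 1))) t := by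
    intro t
    have h₁ : HasDerivAt (fun t => exp ((2 + ε) * t)) (exp ((2 + ε) * t) * (2 + ε)) t := by
      simpa using ((hasDerivAt_id t).const_mul (2 + ε)).exp
    have h₂ : HasDerivAt (fun t => (exp t - 1) ^ 2) (2 * (exp t - 1) * exp t) t := by
      simpa using ((hasDerivAt_exp t).sub_const 1).fun_pow 2
    refine (h₁.sub (h₂.const_mul (ε * (2 + ε)))).congr_deriv ?_
    rw [show (2 + ε) * t = t + (1 + ε) * t by ring, exp_add]
    ring
  have hF' : ∀ t, 0 ≤ (2 + ε) * exp t * (exp ((1 + ε) * t) - 2 * ε * (exp t - 1)) := fun t =>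
    mul_nonneg (by positivity) (sub_nonneg.2 (two_mul_mul_exp_sub_one_le hε t))
  have hmono : Monotone F :=
    monotone_of_deriv_nonneg (fun t => (hF t).differentiableAt) fun t => (hF t).deriv ▸ hF' t
  have := hmono ha
  simp only [F, mul_zero, exp_zero, sub_self] at this
  linarith

lemma exp_sub_one_le_mul_sqrt {ε a : ℝ} (hε : 0 < ε) (ha : 0 ≤ a) :
    exp a - 1 ≤ 1 / ε * sqrt (ε / (2 + ε)) * sqrt (exp ((2 + ε) * a) - 1) := by
  have hE : 0 ≤ exp ((2 + ε) * a) - 1 := sub_nonneg.2 (one_le_exp (by positivity))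
  rw [← pow_le_pow_iff_left₀ (sub_nonneg.2 (one_le_exp ha)) (by positivity) two_ne_zero,
    mul_pow, mul_pow, sq_sqrt (by positivity), sq_sqrt hE]
  have key := mul_mul_exp_sub_one_sq_le hε.le ha
  rw [show (1 / ε) ^ 2 * (ε / (2 + ε)) = 1 / (ε * (2 + ε)) by field_simp, one_div_mul_eq_div,
    le_div_iff₀ (by positivity)]
  linarith

end Real

lemma mul_gronwallBound_add (δ K ε t : ℝ) :
    K * gronwallBound δ K ε t + ε = Real.exp (K * t) * (K * δ + ε) := by
  rcases eq_or_ne K 0 with rfl | hK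
  · simp
  · rw [gronwallBound_of_K_ne_0 hK]
    field_simp
    ring

lemma norm_sub_le_of_norm_deriv_le_mul_norm_add {E : Type*} [NormedAddCommGroup E]
    [NormedSpace ℝ E] {x x' : ℝ → E} {K δ a b : ℝ} (hK : 0 ≤ K) (hδ : 0 ≤ δ) (hab : a ≤ b)
    (hx : ∀ t ∈ Icc a b, HasDerivAt x (x' t) t)
    (bound : ∀ t ∈ Icc a b, ‖x' t‖ ≤ K * ‖x t‖ + δ) :
    ‖x b - x a‖ ≤ (b - a) * Real.exp (K * (b - a)) * (K * ‖x a‖ + δ) := by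
  have hgron : ∀ t ∈ Icc a b, ‖x t‖ ≤ gronwallBound ‖x a‖ K δ (b - a) := fun t ht =>
    (norm_le_gronwallBound_of_norm_deriv_right_le
      (fun t ht => (hx t ht).continuousAt.continuousWithinAt)
      (fun t ht => (hx t (Ico_subset_Icc_self ht)).hasDerivWithinAt) le_rfl
      (fun t ht => bound t (Ico_subset_Icc_self ht)) t ht).trans
    (gronwallBound_mono (norm_nonneg _) hδ hK (by linarith [ht.2]))
  have hderiv : ∀ t ∈ Ico a b, ‖x' t‖ ≤ Real.exp (K * (b - a)) * (K * ‖x a‖ + δ) := by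
    intro t ht
    rw [← mul_gronwallBound_add]
    exact (bound t (Ico_subset_Icc_self ht)).trans
      (by gcongr; exact hgron t (Ico_subset_Icc_self ht))
  have := norm_image_sub_le_of_norm_deriv_le_segment' (fun t ht => (hx t ht).hasDerivWithinAt)
    hderiv b (right_mem_Icc.2 hab)
  linarith

theorem stmt9_general (n m : ℕ) (L₁ L₂ R r ε : ℝ)
    (hL₁ : 0 < L₁) (hL₂ : 0 ≤ L₂) (hR : 0 ≤ R) (hr : 0 < r) (hε : 0 < ε)
    (k : EuclideanSpace ℝ (Fin n) → EuclideanSpace ℝ (Fin m))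
    (hk : ∀ a b : EuclideanSpace ℝ (Fin n), ‖k a - k b‖ ≤ R * ‖a - b‖)
    (u : ℝ → EuclideanSpace ℝ (Fin m))
    (hu_bd : ∃ C, ∀ s ∈ Set.Icc (0:ℝ) r, ‖u s‖ ≤ C)
    (x x' : ℝ → EuclideanSpace ℝ (Fin n))
    (hx : ∀ t ∈ Set.Icc (0:ℝ) r, HasDerivAt x (x' t) t)
    (hineq : ∀ t ∈ Set.Icc (0:ℝ) r, ‖x' t‖ ≤ L₁ * ‖x t‖ + L₂ * ‖u t‖) :
    ‖k (x r) - k (x 0)‖ ≤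
      R * L₁ * r * Real.exp (((2 + ε) / 2) * L₁ * r) * ‖x 0‖ +
        R * L₂ * r *
          ((1 / ε) * Real.sqrt (ε / (2 + ε)) * Real.sqrt (Real.exp ((2 + ε) * L₁ * r) - 1) + 1) *
          ⨆ s : Set.Icc (0:ℝ) r, ‖u s‖ := by
  obtain ⟨C, hC⟩ := hu_bd
  set U := ⨆ s : Set.Icc (0:ℝ) r, ‖u s‖
  have hU : ∀ s ∈ Icc 0 r, ‖u s‖ ≤ U := fun s hs =>
    le_ciSup (f := fun s : Icc (0:ℝ) r => ‖u s‖) ⟨C, by rintro _ ⟨s, rfl⟩; exact hC s s.2⟩ ⟨s, hs⟩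
  have hU0 : 0 ≤ U := (norm_nonneg _).trans (hU 0 (left_mem_Icc.2 hr.le))
  have hdisp := norm_sub_le_of_norm_deriv_le_mul_norm_add (δ := L₂ * U) hL₁.le
    (by positivity) hr.le hx fun t ht => (hineq t ht).trans (by gcongr; exact hU t ht)
  rw [sub_zero] at hdisp
  have hexp₁ : Real.exp (L₁ * r) ≤ Real.exp ((2 + ε) / 2 * L₁ * r) :=
    Real.exp_le_exp.2 (by nlinarith [mul_pos (mul_pos hε hL₁) hr])
  have hexp₂ := Real.exp_sub_one_le_mul_sqrt hε (mul_pos hL₁ hr).le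
  rw [← mul_assoc] at hexp₂
  calc ‖k (x r) - k (x 0)‖ ≤ R * (r * Real.exp (L₁ * r) * (L₁ * ‖x 0‖ + L₂ * U)) :=
        (hk _ _).trans (by gcongr)
    _ = R * L₁ * r * Real.exp (L₁ * r) * ‖x 0‖ + R * L₂ * r * Real.exp (L₁ * r) * U := by ring
    _ ≤ _ := by gcongr; linarith

/-- Error between delayed feedback value k(x(0)) and exact predictor value k(x(r))
in the 'no predictor' case of the remarks following Theorem 2.2. -/
theorem stmt9 (n m : ℕ) (hn : 0 < n) (hm : 0 < m) (L₁ L₂ R r ε : ℝ)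
    (hL₁ : 0 < L₁) (hL₂ : 0 ≤ L₂) (hR : 0 ≤ R) (hr : 0 < r) (hε : 0 < ε)
    (k : EuclideanSpace ℝ (Fin n) → EuclideanSpace ℝ (Fin m))
    (hk : ∀ a b : EuclideanSpace ℝ (Fin n), ‖k a - k b‖ ≤ R * ‖a - b‖)
    (u : ℝ → EuclideanSpace ℝ (Fin m)) (hu_meas : Measurable u)
    (hu_bd : ∃ C, ∀ s ∈ Set.Icc (0:ℝ) r, ‖u s‖ ≤ C)
    (x x' : ℝ → EuclideanSpace ℝ (Fin n))
    (hx : ∀ t ∈ Set.Icc (0:ℝ) r, HasDerivAt x (x' t) t)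
    (hineq : ∀ t ∈ Set.Icc (0:ℝ) r, ‖x' t‖ ≤ L₁ * ‖x t‖ + L₂ * ‖u t‖) :
    ‖k (x r) - k (x 0)‖ ≤
      R * L₁ * r * Real.exp (((2 + ε) / 2) * L₁ * r) * ‖x 0‖ +
        R * L₂ * r *
          ((1 / ε) * Real.sqrt (ε / (2 + ε)) * Real.sqrt (Real.exp ((2 + ε) * L₁ * r) - 1) + 1) *
          ⨆ s : Set.Icc (0:ℝ) r, ‖u s‖ :=
  stmt9_general n m L₁ L₂ R r ε hL₁ hL₂ hR hr hε k hk u hu_bd x x' hx hineq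
end

section
/- Let m be a positive integer, μ>0, let g:[0,∞)→ℝᵐ and p:[0,∞)→ℝᵐ be continuous, let h:[0,∞)→[0,∞) be continuous, and let w,κ:[0,∞)→ℝᵐ be differentiable functions such that for all t≥0: ẇ(t) = g(t) − μ(w(t) − p(t)), |κ̇(t) − g(t)| ≤ h(t), and |κ(t) − p(t)| ≤ h(t). Then for all t≥0, |w(t) − κ(t)| ≤ e^{−μt} |w(0) − κ(0)| + (1 + 1/μ) · sup_{0≤s≤t} h(s). -/
open Set

/-!
The error `e = w - κ` satisfies `e' + μ e = (g - κ') + μ (p - κ)`, whose right-hand side is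
bounded by `(1 + μ) H` with `H = sup h`. Comparing the norm of `exp (μ s) • e s` with the
solution of the scalar equation `B' = (1 + μ) H exp (μ s)` gives
`‖e t‖ ≤ exp (-μ t) ‖e 0‖ + (1 + μ) H / μ · (1 - exp (-μ t))`.
-/

section IntegratingFactor

variable {E : Type*} [NormedAddCommGroup E] [NormedSpace ℝ E]

theorem hasDerivAt_exp_mul_sub (μ a s : ℝ) :
    HasDerivAt (fun s => Real.exp (μ * (s - a))) (Real.exp (μ * (s - a)) * μ) s := by
  simpa using (((hasDerivAt_id s).sub_const a).const_mul μ).exp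

theorem norm_le_of_norm_deriv_add_smul_le {e e' : ℝ → E} {μ C a b : ℝ} (hμ : μ ≠ 0)
    (hab : a ≤ b) (hcont : ContinuousOn e (Icc a b))
    (hderiv : ∀ s ∈ Ico a b, HasDerivWithinAt e (e' s) (Ici s) s)
    (hbound : ∀ s ∈ Ico a b, ‖e' s + μ • e s‖ ≤ C) :
    ‖e b‖ ≤ Real.exp (-μ * (b - a)) * ‖e a‖ + C / μ * (1 - Real.exp (-μ * (b - a))) := by
  set φ := fun s => Real.exp (μ * (s - a))
  have hφ_pos : ∀ s, 0 < φ s := fun s => Real.exp_pos _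
  have hv : ∀ s ∈ Ico a b,
      HasDerivWithinAt (fun s => φ s • e s) (φ s • (e' s + μ • e s)) (Ici s) s := by
    intro s hs
    refine ((hasDerivAt_exp_mul_sub μ a s).hasDerivWithinAt.smul (hderiv s hs)).congr_deriv ?_
    module
  have hv_bound : ∀ s ∈ Ico a b, ‖φ s • (e' s + μ • e s)‖ ≤ C * φ s := by
    intro s hs
    rw [norm_smul, Real.norm_of_nonneg (hφ_pos s).le, mul_comm]
    exact mul_le_mul_of_nonneg_right (hbound s hs) (hφ_pos s).le
  have hB : ∀ s, HasDerivAt (fun s => ‖e a‖ + C / μ * (φ s - 1)) (C * φ s) s := fun s =>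
    ((((hasDerivAt_exp_mul_sub μ a s).sub_const 1).const_mul (C / μ)).const_add _).congr_deriv
      (by simp only [φ]; field_simp)
  have hcomp : ‖φ b • e b‖ ≤ ‖e a‖ + C / μ * (φ b - 1) :=
    image_norm_le_of_norm_deriv_right_le_deriv_boundary
      ((Continuous.continuousOn (by fun_prop)).smul hcont) hv (by simp [φ]) hB hv_bound
      (right_mem_Icc.2 hab)
  have hinv : Real.exp (-μ * (b - a)) * φ b = 1 := by
    rw [← Real.exp_add]; simp
  rw [norm_smul, Real.norm_of_nonneg (hφ_pos b).le] at hcomp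
  calc ‖e b‖ = Real.exp (-μ * (b - a)) * (φ b * ‖e b‖) := by rw [← mul_assoc, hinv, one_mul]
    _ ≤ Real.exp (-μ * (b - a)) * (‖e a‖ + C / μ * (φ b - 1)) := by gcongr
    _ = _ := by linear_combination (C / μ) * hinv

end IntegratingFactor

theorem le_iSup_Icc_of_continuousOn {h : ℝ → ℝ} {a b s : ℝ} (hh : ContinuousOn h (Icc a b))
    (hs : s ∈ Icc a b) : h s ≤ ⨆ x : Icc a b, h x := by
  refine le_ciSup (f := fun x : Icc a b => h x) ?_ ⟨s, hs⟩
  rw [← image_eq_range]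
  exact (isCompact_Icc.image_of_continuousOn hh).bddAbove

theorem stmt10_general (m : ℕ) (μ : ℝ) (hμ : 0 < μ)
    (g p : ℝ → EuclideanSpace ℝ (Fin m))
    (h : ℝ → ℝ) (hh_cont : ContinuousOn h (Set.Ici 0))
    (w κ w' κ' : ℝ → EuclideanSpace ℝ (Fin m))
    (hw : ∀ t ≥ (0:ℝ), HasDerivAt w (w' t) t)
    (hκ : ∀ t ≥ (0:ℝ), HasDerivAt κ (κ' t) t)
    (hode : ∀ t ≥ (0:ℝ), w' t = g t - μ • (w t - p t))
    (hgerr : ∀ t ≥ (0:ℝ), ‖κ' t - g t‖ ≤ h t)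
    (hperr : ∀ t ≥ (0:ℝ), ‖κ t - p t‖ ≤ h t) :
    ∀ t ≥ (0:ℝ), ‖w t - κ t‖ ≤
      Real.exp (-μ * t) * ‖w 0 - κ 0‖ + (1 + 1 / μ) * ⨆ s : Set.Icc (0:ℝ) t, h s := by
  intro t ht
  set H := ⨆ s : Set.Icc (0:ℝ) t, h s
  have hH : ∀ s ∈ Icc 0 t, h s ≤ H := fun s hs =>
    le_iSup_Icc_of_continuousOn (hh_cont.mono Icc_subset_Ici_self) hs
  have hH_nonneg : 0 ≤ H := (norm_nonneg _).trans ((hperr 0 le_rfl).trans (hH 0 ⟨le_rfl, ht⟩))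
  have hforcing : ∀ s ∈ Ico 0 t, ‖(w' s - κ' s) + μ • (w s - κ s)‖ ≤ (1 + μ) * H := by
    intro s ⟨hs0, hst⟩
    have hhs := hH s ⟨hs0, hst.le⟩
    calc ‖(w' s - κ' s) + μ • (w s - κ s)‖ = ‖(g s - κ' s) + μ • (p s - κ s)‖ := by
          rw [hode s hs0]; congr 1; module
      _ ≤ ‖κ' s - g s‖ + μ * ‖κ s - p s‖ := by
          grw [norm_add_le, norm_smul, Real.norm_of_nonneg hμ.le, norm_sub_rev, norm_sub_rev (p s)]
      _ ≤ (1 + μ) * H := by nlinarith [hgerr s hs0, hperr s hs0]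
  have key := norm_le_of_norm_deriv_add_smul_le (e := fun s => w s - κ s) hμ.ne' ht
    (fun s hs => ((hw s hs.1).continuousAt.sub (hκ s hs.1).continuousAt).continuousWithinAt)
    (fun s hs => ((hw s hs.1).sub (hκ s hs.1)).hasDerivWithinAt) hforcing
  rw [sub_zero] at key
  refine key.trans (add_le_add le_rfl ?_)
  calc (1 + μ) * H / μ * (1 - Real.exp (-μ * t)) ≤ (1 + μ) * H / μ * 1 := by
        gcongr; exact sub_le_self _ (Real.exp_pos _).le
    _ = (1 + 1 / μ) * H := by field_simp; ring

/-- The tracking estimate (2.43) used in the proof of Theorem 2.3. -/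
theorem stmt10 (m : ℕ) (hm : 0 < m) (μ : ℝ) (hμ : 0 < μ)
    (g p : ℝ → EuclideanSpace ℝ (Fin m))
    (hg : ContinuousOn g (Set.Ici 0)) (hp : ContinuousOn p (Set.Ici 0))
    (h : ℝ → ℝ) (hh_cont : ContinuousOn h (Set.Ici 0)) (hh_nonneg : ∀ t ≥ (0:ℝ), 0 ≤ h t)
    (w κ w' κ' : ℝ → EuclideanSpace ℝ (Fin m))
    (hw : ∀ t ≥ (0:ℝ), HasDerivAt w (w' t) t)
    (hκ : ∀ t ≥ (0:ℝ), HasDerivAt κ (κ' t) t)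
    (hode : ∀ t ≥ (0:ℝ), w' t = g t - μ • (w t - p t))
    (hgerr : ∀ t ≥ (0:ℝ), ‖κ' t - g t‖ ≤ h t)
    (hperr : ∀ t ≥ (0:ℝ), ‖κ t - p t‖ ≤ h t) :
    ∀ t ≥ (0:ℝ), ‖w t - κ t‖ ≤
      Real.exp (-μ * t) * ‖w 0 - κ 0‖ + (1 + 1 / μ) * ⨆ s : Set.Icc (0:ℝ) t, h s :=
  stmt10_general m μ hμ g p h hh_cont w κ w' κ' hw hκ hode hgerr hperr
end
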